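/- Let X ⊆ ℝ^d be a nonempty closed convex set with metric projection P_X, and let f_1, …, f_n : ℝ^d → ℝ be differentiable, μ-strongly convex and L-smooth with 0 < μ ≤ L; set f = (1/n)Σ_l f_l and let x* be the unique minimizer of f over X. Let φ, φ', π ∈ ℝⁿ be positive stochastic vectors, R a row-stochastic n×n matrix with φ'ᵀR = φᵀ, 0 < η < 1/(nL), λ ∈ (0, 1], and x_1, …, x_n, y_1, …, y_n ∈ ℝ^d with Σ_l y_l = Σ_l ∇f_l(x_l). Define z_i = (1 − λ)x_i + λ P_X(x_i − η y_i) and x⁺_i = Σ_j R_{ij} z_j. Assume the averaging contraction: with x̂ = Σ_j φ_j x_j, √(Σ_i φ'_i ‖Σ_j R_{ij} x_j − x̂‖²) ≤ σ·√(Σ_i φ_i ‖x_i − x̂‖²) for some σ ∈ (0, 1). Write φ̃ = √(1/min_i φ_i) and φ̃' = √(1/min_i φ'_i). Then √(Σ_i ‖x⁺_i − x_i‖²) ≤ λ·φ̃'·(1 + q_π(η, 1))·√(Σ_i φ_i ‖x_i − x*‖²) + [(1/√2)(φ̃ + σφ̃') + ηλL·φ̃φ̃'·√n]·D(x, φ)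 + ηλ·φ̃'·S(y, π), where q_π(η, λ) = max_i (1 − λ·η n π_i·μ). -/

import Mathlib

/-!
Write `p_j = P_X(x_j - η y_j)` and `x̂ = Σ_j φ_j x_j`. Then
`x⁺_i - x_i = (Σ_j R_ij x_j - x̂) + (x̂ - x_i) + λ Σ_j R_ij (p_j - x_j)`.
The first two terms are consensus errors: the first is controlled by the contraction of `R`,
and both are expressed through `D(x, φ)² = 2 Σ_i φ_i ‖x_i - x̂‖²`. For the third, Jensen's
inequality and `φ'ᵀR = φᵀ` reduce it to `Σ_j φ_j ‖p_j - x_j‖²`. The step of node `j` is then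
compared with the exact projected gradient step of size `η n π_j` on `f`, which contracts
towards `x*` by the factor `1 - η n π_j μ ≤ q_π(η, 1)` (cocoercivity of `∇f - μ id`); the two
steps differ by the tracking error of `y_j` and by the `L`-Lipschitz mismatch between the
gradients `∇f_l` at `x_j` and at `x_l`.
-/

open Finset RealInnerProductSpace

/-- Consensus error `D(u, a) = √(Σ_i Σ_j a_i a_j ‖u_i − u_j‖²)`. -/
noncomputable def Derr {n d : ℕ} (a : Fin n → ℝ) (u : Fin n → EuclideanSpace ℝ (Fin d)) : ℝ :=
  Real.sqrt (∑ i, ∑ j, a i * a j * ‖u i - u j‖ ^ 2)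

/-- Gradient-tracking error `S(y, a) = √(Σ_i a_i ‖y_i/a_i − Σ_l y_l‖²)`. -/
noncomputable def Serr {n d : ℕ} (a : Fin n → ℝ) (y : Fin n → EuclideanSpace ℝ (Fin d)) : ℝ :=
  Real.sqrt (∑ i, a i * ‖(a i)⁻¹ • y i - (∑ l, y l)‖ ^ 2)

/-- Minimum entry of a vector over `Fin n`, `n ≠ 0`. -/
noncomputable def fmin {n : ℕ} [NeZero n] (a : Fin n → ℝ) : ℝ :=
  Finset.univ.inf' Finset.univ_nonempty a

/-- `q_π(η, λ) = max_i (1 − λ·ηnπ_i·μ)`. -/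
noncomputable def qmax {n : ℕ} [NeZero n] (π : Fin n → ℝ) (μ η lam : ℝ) : ℝ :=
  Finset.univ.sup' Finset.univ_nonempty (fun i => 1 - lam * (η * n * π i) * μ)

lemma le_add_half_of_hasDerivAt_le_mul {h h' : ℝ → ℝ} {c : ℝ} (hd : ∀ t, HasDerivAt h (h' t) t)
    (hle : ∀ t ∈ Set.Ioo (0 : ℝ) 1, h' t ≤ c * t) : h 1 ≤ h 0 + c / 2 := by
  have hd' : ∀ t, HasDerivAt (fun s => h s - c / 2 * s ^ 2) (h' t - c * t) t := fun t => by
    refine ((hd t).sub ((hasDerivAt_pow 2 t).const_mul (c / 2))).congr_deriv ?_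
    norm_num
    ring
  have hanti : AntitoneOn (fun s => h s - c / 2 * s ^ 2) (Set.Icc 0 1) := by
    refine antitoneOn_of_deriv_nonpos (convex_Icc 0 1)
      (HasDerivAt.continuousOn fun t _ => hd' t)
      (fun t _ => (hd' t).differentiableAt.differentiableWithinAt) fun t ht => ?_
    rw [interior_Icc] at ht
    rw [(hd' t).deriv]
    linarith [hle t ht]
  have := hanti (Set.left_mem_Icc.2 zero_le_one) (Set.right_mem_Icc.2 zero_le_one) zero_le_one
  simp only at this
  linarith

section QuadraticBounds

variable {E : Type*} [NormedAddCommGroup E] [InnerProductSpace ℝ E] [CompleteSpace E]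

lemma hasDerivAt_comp_add_smul_sub_inner_gradient {f : E → ℝ} (hf : Differentiable ℝ f)
    (u v : E) (t : ℝ) :
    HasDerivAt (fun s : ℝ => f (u + s • v) - s * ⟪gradient f u, v⟫)
      ⟪gradient f (u + t • v) - gradient f u, v⟫ t := by
  have hline : HasDerivAt (fun s : ℝ => u + s • v) v t := by
    simpa using ((hasDerivAt_id t).smul_const v).const_add u
  have hcomp : HasDerivAt (fun s : ℝ => f (u + s • v)) ⟪gradient f (u + t • v), v⟫ t :=
    (hf _).hasGradientAt.hasFDerivAt.comp_hasDerivAt t hline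
  rw [inner_sub_left]
  exact hcomp.sub (hasDerivAt_mul_const _)

lemma inner_gradient_add_smul_sub_eq (f : E → ℝ) (u v : E) {t : ℝ} (ht : 0 < t) :
    ⟪gradient f (u + t • v) - gradient f u, v⟫
      = t⁻¹ * ⟪gradient f (u + t • v) - gradient f u, (u + t • v) - u⟫ := by
  rw [add_sub_cancel_left, inner_smul_right, ← mul_assoc, inv_mul_cancel₀ ht.ne', one_mul]

lemma le_add_inner_gradient_add_of_inner_gradient_sub_le {f : E → ℝ} (hf : Differentiable ℝ f)
    {c : ℝ} (hmono : ∀ u v, ⟪gradient f u - gradient f v, u - v⟫ ≤ c * ‖u - v‖ ^ 2) (u v : E) :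
    f v ≤ f u + ⟪gradient f u, v - u⟫ + c / 2 * ‖v - u‖ ^ 2 := by
  have key := le_add_half_of_hasDerivAt_le_mul (c := c * ‖v - u‖ ^ 2)
    (hasDerivAt_comp_add_smul_sub_inner_gradient hf u (v - u)) fun t ht => by
      have h := hmono (u + t • (v - u)) u
      rw [inner_gradient_add_smul_sub_eq f u _ ht.1, inv_mul_le_iff₀ ht.1]
      rw [add_sub_cancel_left, norm_smul, Real.norm_eq_abs, abs_of_pos ht.1] at h
      rw [add_sub_cancel_left]
      linarith [show c * (t * ‖v - u‖) ^ 2 = t * (c * ‖v - u‖ ^ 2 * t) by ring]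
  simp only [one_smul, zero_smul, add_zero, add_sub_cancel, one_mul, zero_mul, sub_zero] at key
  linarith

lemma add_inner_gradient_add_le_of_le_inner_gradient_sub {f : E → ℝ} (hf : Differentiable ℝ f)
    {c : ℝ} (hmono : ∀ u v, c * ‖u - v‖ ^ 2 ≤ ⟪gradient f u - gradient f v, u - v⟫) (u v : E) :
    f u + ⟪gradient f u, v - u⟫ + c / 2 * ‖v - u‖ ^ 2 ≤ f v := by
  have key := le_add_half_of_hasDerivAt_le_mul (c := -c * ‖v - u‖ ^ 2)
    (fun t => (hasDerivAt_comp_add_smul_sub_inner_gradient hf u (v - u) t).neg) fun t ht => by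
      have h := hmono (u + t • (v - u)) u
      rw [inner_gradient_add_smul_sub_eq f u _ ht.1, neg_le, ← neg_mul, le_inv_mul_iff₀ ht.1]
      rw [add_sub_cancel_left, norm_smul, Real.norm_eq_abs, abs_of_pos ht.1] at h
      rw [add_sub_cancel_left]
      linarith [show c * (t * ‖v - u‖) ^ 2 = t * (c * ‖v - u‖ ^ 2 * t) by ring]
  simp only [Pi.neg_apply, one_smul, zero_smul, add_zero, add_sub_cancel, one_mul, zero_mul,
    sub_zero] at key
  linarith

end QuadraticBounds

section Cocoercivity

variable {E : Type*} [NormedAddCommGroup E] [InnerProductSpace ℝ E]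

/-- The Baillon–Haddad cocoercivity inequality. -/
lemma norm_sub_sq_le_mul_inner_of_quadratic_bounds {f : E → ℝ} {g : E → E} {K : ℝ} (hK : 0 < K)
    (hlow : ∀ u w, f u + ⟪g u, w - u⟫ ≤ f w)
    (hup : ∀ u w, f w ≤ f u + ⟪g u, w - u⟫ + K / 2 * ‖w - u‖ ^ 2) (u v : E) :
    ‖g u - g v‖ ^ 2 ≤ K * ⟪g u - g v, u - v⟫ := by
  have key : ∀ a b, f a + ⟪g a, b - a⟫ + (2 * K)⁻¹ * ‖g b - g a‖ ^ 2 ≤ f b := by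
    intro a b
    -- compare `f` at `b` and at `b - K⁻¹ • (g b - g a)` through both bounds
    set e := g b - g a
    have h1 := hlow a (b - K⁻¹ • e)
    have h2 := hup b (b - K⁻¹ • e)
    rw [sub_sub_cancel_left, norm_neg, norm_smul, Real.norm_eq_abs, abs_inv, abs_of_pos hK,
      inner_neg_right, inner_smul_right] at h2
    rw [sub_right_comm, inner_sub_right, inner_smul_right] at h1
    have he : ⟪g b, e⟫ - ⟪g a, e⟫ = ‖e‖ ^ 2 := by
      rw [← inner_sub_left, real_inner_self_eq_norm_sq]
    have he' : K⁻¹ * ⟪g b, e⟫ - K⁻¹ * ⟪g a, e⟫ = 2 * ((2 * K)⁻¹ * ‖e‖ ^ 2) := by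
      rw [← mul_sub, he]
      field_simp
    have hK : K / 2 * (K⁻¹ * ‖e‖) ^ 2 = (2 * K)⁻¹ * ‖e‖ ^ 2 := by
      field_simp
    linarith
  have hsym : ⟪g u, v - u⟫ + ⟪g v, u - v⟫ = -⟪g u - g v, u - v⟫ := by
    rw [← neg_sub u v, inner_neg_right, inner_sub_left]
    ring
  have k1 := key u v
  have k2 := key v u
  rw [norm_sub_rev (g v)] at k1
  have : K⁻¹ * ‖g u - g v‖ ^ 2 ≤ ⟪g u - g v, u - v⟫ := by
    linarith [show K⁻¹ * ‖g u - g v‖ ^ 2 = 2 * ((2 * K)⁻¹ * ‖g u - g v‖ ^ 2) by field_simp]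
  rwa [inv_mul_le_iff₀ hK] at this

end Cocoercivity

section GradientStep

variable {E : Type*} [NormedAddCommGroup E] [InnerProductSpace ℝ E] [CompleteSpace E]
  {f : E → ℝ} {μ L : ℝ}

/-- `f - μ/2 ‖·‖²` is convex with an `(L - μ)`-quadratic upper bound, so its gradient
`∇f - μ • id` is cocoercive. -/
lemma norm_sub_sq_le_mul_inner_gradient_sub_smul (hf : Differentiable ℝ f)
    (hs : ∀ u v, μ * ‖u - v‖ ^ 2 ≤ ⟪gradient f u - gradient f v, u - v⟫)
    (hL : ∀ u v, ‖gradient f u - gradient f v‖ ≤ L * ‖u - v‖) {K : ℝ} (hK : 0 < K)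
    (hLK : L - μ ≤ K) (u v : E) :
    ‖(gradient f u - μ • u) - (gradient f v - μ • v)‖ ^ 2
      ≤ K * ⟪(gradient f u - μ • u) - (gradient f v - μ • v), u - v⟫ := by
  have hLmono : ∀ u v, ⟪gradient f u - gradient f v, u - v⟫ ≤ L * ‖u - v‖ ^ 2 := fun u v =>
    (real_inner_le_norm _ _).trans (by nlinarith [hL u v, norm_nonneg (u - v)])
  have hquad : ∀ a b : E,
      μ / 2 * ‖b‖ ^ 2 - μ / 2 * ‖a‖ ^ 2 - ⟪μ • a, b - a⟫ = μ / 2 * ‖b - a‖ ^ 2 := by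
    intro a b
    rw [norm_sub_sq_real, inner_smul_left, inner_sub_right, real_inner_self_eq_norm_sq,
      real_inner_comm, RCLike.conj_to_real]
    ring
  refine norm_sub_sq_le_mul_inner_of_quadratic_bounds (f := fun w => f w - μ / 2 * ‖w‖ ^ 2)
    (g := fun w => gradient f w - μ • w) hK
    (fun a b => ?_) (fun a b => ?_) u v
  · have := add_inner_gradient_add_le_of_le_inner_gradient_sub hf hs a b
    rw [inner_sub_left]
    linarith [hquad a b]
  · have := le_add_inner_gradient_add_of_inner_gradient_sub_le hf hLmono a b
    rw [inner_sub_left]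
    linarith [hquad a b, mul_le_mul_of_nonneg_right hLK (sq_nonneg ‖b - a‖)]

lemma norm_sub_smul_gradient_sub_le (hf : Differentiable ℝ f)
    (hs : ∀ u v, μ * ‖u - v‖ ^ 2 ≤ ⟪gradient f u - gradient f v, u - v⟫)
    (hL : ∀ u v, ‖gradient f u - gradient f v‖ ≤ L * ‖u - v‖) (hμL : μ ≤ L) {α : ℝ}
    (hα : 0 < α) (hαL : α * L < 1) (u v : E) :
    ‖(u - α • gradient f u) - (v - α • gradient f v)‖ ≤ (1 - α * μ) * ‖u - v‖ := by
  have hαμ : 0 < 1 - α * μ := by nlinarith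
  -- the cocoercivity constant `K` for which `α² K = 2 α (1 - α μ)`
  set K := 2 * (1 - α * μ) / α
  have hK : 0 < K := by positivity
  have hLK : L - μ ≤ K := by
    rw [le_div_iff₀ hα]
    nlinarith
  set e := (gradient f u - μ • u) - (gradient f v - μ • v)
  have hcoco : ‖e‖ ^ 2 ≤ K * ⟪e, u - v⟫ :=
    norm_sub_sq_le_mul_inner_gradient_sub_smul hf hs hL hK hLK u v
  have hstep : (u - α • gradient f u) - (v - α • gradient f v) = (1 - α * μ) • (u - v) - α • e := by
    simp only [e]
    module
  have hsq : ‖(1 - α * μ) • (u - v) - α • e‖ ^ 2 ≤ ((1 - α * μ) * ‖u - v‖) ^ 2 := by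
    rw [norm_sub_sq_real, norm_smul, norm_smul, real_inner_smul_left, real_inner_smul_right,
      real_inner_comm, Real.norm_eq_abs, Real.norm_eq_abs, abs_of_pos hαμ, abs_of_pos hα]
    have : α ^ 2 * K = 2 * α * (1 - α * μ) := by simp only [K]; field_simp
    nlinarith [mul_le_mul_of_nonneg_left hcoco (sq_nonneg α)]
  rw [hstep]
  exact (pow_le_pow_iff_left₀ (norm_nonneg _) (by positivity) two_ne_zero).1 hsq

end GradientStep

section Projection

variable {E : Type*} [NormedAddCommGroup E] [InnerProductSpace ℝ E] {X : Set E}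

lemma inner_sub_le_zero_of_forall_norm_sub_le (hX : Convex ℝ X) {v p : E} (hp : p ∈ X)
    (hmin : ∀ u ∈ X, ‖v - p‖ ≤ ‖v - u‖) {w : E} (hw : w ∈ X) : ⟪v - p, w - p⟫ ≤ 0 := by
  have : Nonempty X := ⟨⟨p, hp⟩⟩
  refine (norm_eq_iInf_iff_real_inner_le_zero hX hp).1 (le_antisymm ?_ ?_) w hw
  · exact le_ciInf fun u => hmin u u.2
  · exact ciInf_le ⟨0, Set.forall_mem_range.2 fun _ => norm_nonneg _⟩ (⟨p, hp⟩ : X)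

lemma norm_sub_sq_le_inner_of_variational_ineq {a b p q : E} (hp : p ∈ X) (hq : q ∈ X)
    (ha : ∀ w ∈ X, ⟪a - p, w - p⟫ ≤ 0) (hb : ∀ w ∈ X, ⟪b - q, w - q⟫ ≤ 0) :
    ‖p - q‖ ^ 2 ≤ ⟪a - b, p - q⟫ := by
  have h1 := ha q hq
  have h2 := hb p hp
  rw [← neg_sub p q, inner_neg_right] at h1
  have : ⟪a - b, p - q⟫ = ⟪a - p, p - q⟫ - ⟪b - q, p - q⟫ + ‖p - q‖ ^ 2 := by
    rw [← real_inner_self_eq_norm_sq, ← inner_sub_left, ← inner_add_left]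
    congr 1
    abel
  linarith

variable {P : E → E}

lemma norm_proj_sub_proj_le (hX : Convex ℝ X) (hPmem : ∀ v, P v ∈ X)
    (hPproj : ∀ v, ∀ u ∈ X, ‖v - P v‖ ≤ ‖v - u‖) (a b : E) : ‖P a - P b‖ ≤ ‖a - b‖ := by
  have h := norm_sub_sq_le_inner_of_variational_ineq (hPmem a) (hPmem b)
    (fun _ => inner_sub_le_zero_of_forall_norm_sub_le hX (hPmem a) (hPproj a))
    (fun _ => inner_sub_le_zero_of_forall_norm_sub_le hX (hPmem b) (hPproj b))
  have := h.trans (real_inner_le_norm _ _)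
  nlinarith [norm_nonneg (P a - P b), norm_nonneg (a - b)]

lemma proj_eq_of_inner_sub_le_zero (hX : Convex ℝ X) (hPmem : ∀ v, P v ∈ X)
    (hPproj : ∀ v, ∀ u ∈ X, ‖v - P v‖ ≤ ‖v - u‖) {v p : E} (hp : p ∈ X)
    (hvi : ∀ w ∈ X, ⟪v - p, w - p⟫ ≤ 0) : P v = p := by
  have h := norm_sub_sq_le_inner_of_variational_ineq (hPmem v) hp
    (fun _ => inner_sub_le_zero_of_forall_norm_sub_le hX (hPmem v) (hPproj v)) hvi
  rw [sub_self, inner_zero_left] at h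
  exact sub_eq_zero.1 (norm_eq_zero.1 (pow_eq_zero_iff two_ne_zero |>.1
    (le_antisymm h (sq_nonneg _))))

end Projection

section ProjectedGradient

variable {E : Type*} [NormedAddCommGroup E] [InnerProductSpace ℝ E] [CompleteSpace E]
  {X : Set E} {F : E → ℝ} {xs : E}

lemma IsMinOn.inner_gradient_sub_nonneg (hmin : IsMinOn F X xs) (hF : DifferentiableAt ℝ F xs)
    (hX : Convex ℝ X) (hxs : xs ∈ X) {w : E} (hw : w ∈ X) : 0 ≤ ⟪gradient F xs, w - xs⟫ := by
  have hseg : segment ℝ xs (xs + (w - xs)) ⊆ X := by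
    rw [add_sub_cancel]
    exact hX.segment_subset hxs hw
  have := hmin.localize.hasFDerivWithinAt_nonneg hF.hasFDerivAt.hasFDerivWithinAt
    (mem_posTangentConeAt_of_segment_subset hseg)
  rwa [gradient, InnerProductSpace.toDual_symm_apply]

variable {P : E → E}

lemma proj_sub_smul_gradient_eq_of_isMinOn (hX : Convex ℝ X) (hPmem : ∀ v, P v ∈ X)
    (hPproj : ∀ v, ∀ u ∈ X, ‖v - P v‖ ≤ ‖v - u‖) (hF : DifferentiableAt ℝ F xs) (hxs : xs ∈ X)
    (hmin : IsMinOn F X xs) {α : ℝ} (hα : 0 ≤ α) : P (xs - α • gradient F xs) = xs :=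
  proj_eq_of_inner_sub_le_zero hX hPmem hPproj hxs fun w hw => by
    rw [sub_sub_cancel_left, inner_neg_left, real_inner_smul_left, neg_nonpos]
    exact mul_nonneg hα (hmin.inner_gradient_sub_nonneg hF hX hxs hw)

lemma norm_proj_sub_smul_gradient_sub_le {μ L α : ℝ} (hX : Convex ℝ X) (hPmem : ∀ v, P v ∈ X)
    (hPproj : ∀ v, ∀ u ∈ X, ‖v - P v‖ ≤ ‖v - u‖) (hF : Differentiable ℝ F)
    (hs : ∀ u v, μ * ‖u - v‖ ^ 2 ≤ ⟪gradient F u - gradient F v, u - v⟫)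
    (hL : ∀ u v, ‖gradient F u - gradient F v‖ ≤ L * ‖u - v‖) (hμL : μ ≤ L)
    (hα : 0 < α) (hαL : α * L < 1) (hxs : xs ∈ X) (hmin : IsMinOn F X xs) (u : E) :
    ‖P (u - α • gradient F u) - xs‖ ≤ (1 - α * μ) * ‖u - xs‖ := by
  calc ‖P (u - α • gradient F u) - xs‖
      = ‖P (u - α • gradient F u) - P (xs - α • gradient F xs)‖ := by
        rw [proj_sub_smul_gradient_eq_of_isMinOn hX hPmem hPproj (hF xs) hxs hmin hα.le]
    _ ≤ ‖(u - α • gradient F u) - (xs - α • gradient F xs)‖ :=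
        norm_proj_sub_proj_le hX hPmem hPproj _ _
    _ ≤ (1 - α * μ) * ‖u - xs‖ := norm_sub_smul_gradient_sub_le hF hs hL hμL hα hαL u xs

end ProjectedGradient

section WeightedSums

variable {ι : Type*} [Fintype ι]

lemma sqrt_sum_mul_sq_add_le {a : ι → ℝ} (ha : ∀ i, 0 ≤ a i) (u v : ι → ℝ) :
    √(∑ i, a i * (u i + v i) ^ 2) ≤ √(∑ i, a i * u i ^ 2) + √(∑ i, a i * v i ^ 2) := by
  -- Minkowski's inequality in `ℓ²`, applied to `√aᵢ uᵢ` and `√aᵢ vᵢ`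
  have key : ∀ r : ι → ℝ,
      √(∑ i, a i * r i ^ 2) = ‖(WithLp.toLp 2 fun i => √(a i) * r i : EuclideanSpace ℝ ι)‖ := by
    intro r
    rw [EuclideanSpace.norm_eq]
    congr 1
    refine sum_congr rfl fun i _ => ?_
    rw [PiLp.toLp_apply, Real.norm_eq_abs, sq_abs, mul_pow, Real.sq_sqrt (ha i)]
  have hadd : (WithLp.toLp 2 fun i => √(a i) * (u i + v i) : EuclideanSpace ℝ ι)
      = WithLp.toLp 2 (fun i => √(a i) * u i) + WithLp.toLp 2 (fun i => √(a i) * v i) := by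
    rw [← WithLp.toLp_add]
    congr 1
    funext i
    exact mul_add _ _ _
  rw [key, key, key, hadd]
  exact norm_add_le _ _

lemma sqrt_sum_mul_sq_le_of_le {a u v : ι → ℝ} (ha : ∀ i, 0 ≤ a i) (hu : ∀ i, 0 ≤ u i)
    (huv : ∀ i, u i ≤ v i) : √(∑ i, a i * u i ^ 2) ≤ √(∑ i, a i * v i ^ 2) :=
  Real.sqrt_le_sqrt <| sum_le_sum fun i _ =>
    mul_le_mul_of_nonneg_left (pow_le_pow_left₀ (hu i) (huv i) 2) (ha i)

lemma sqrt_sum_mul_mul_sq (a r : ι → ℝ) {c : ℝ} (hc : 0 ≤ c) :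
    √(∑ i, a i * (c * r i) ^ 2) = c * √(∑ i, a i * r i ^ 2) := by
  have : ∑ i, a i * (c * r i) ^ 2 = c ^ 2 * ∑ i, a i * r i ^ 2 := by
    rw [mul_sum]
    exact sum_congr rfl fun i _ => by ring
  rw [this, Real.sqrt_mul (sq_nonneg c), Real.sqrt_sq hc]

lemma sum_le_inv_mul_sum_mul {a r : ι → ℝ} {c : ℝ} (hc : 0 < c) (hca : ∀ i, c ≤ a i)
    (hr : ∀ i, 0 ≤ r i) : ∑ i, r i ≤ 1 / c * ∑ i, a i * r i := by
  rw [mul_sum]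
  refine sum_le_sum fun i _ => ?_
  rw [← mul_assoc, one_div, mul_assoc, le_inv_mul_iff₀ hc]
  exact mul_le_mul_of_nonneg_right (hca i) (hr i)

lemma sqrt_sum_le_sqrt_inv_mul_sqrt_sum_mul {a r : ι → ℝ} {c : ℝ} (hc : 0 < c)
    (hca : ∀ i, c ≤ a i) (hr : ∀ i, 0 ≤ r i) :
    √(∑ i, r i) ≤ √(1 / c) * √(∑ i, a i * r i) := by
  rw [← Real.sqrt_mul (by positivity)]
  exact Real.sqrt_le_sqrt (sum_le_inv_mul_sum_mul hc hca hr)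

lemma sqrt_sum_mul_sq_le_add_add {a w u v t : ι → ℝ} (ha : ∀ i, 0 ≤ a i) (hw : ∀ i, 0 ≤ w i)
    (hwuvt : ∀ i, w i ≤ u i + v i + t i) :
    √(∑ i, a i * w i ^ 2)
      ≤ √(∑ i, a i * u i ^ 2) + √(∑ i, a i * v i ^ 2) + √(∑ i, a i * t i ^ 2) :=
  (sqrt_sum_mul_sq_le_of_le ha hw hwuvt).trans <| (sqrt_sum_mul_sq_add_le ha _ _).trans <|
    add_le_add_left (sqrt_sum_mul_sq_add_le ha u v) _

lemma sqrt_sum_mul_mul_sq_le {a b s : ι → ℝ} (ha1 : ∀ i, a i ≤ 1)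
    (hb0 : ∀ i, 0 ≤ b i) (hb1 : ∀ i, b i ≤ 1) :
    √(∑ i, a i * (b i * s i) ^ 2) ≤ √(∑ i, b i * s i ^ 2) := by
  refine Real.sqrt_le_sqrt (sum_le_sum fun i _ => ?_)
  calc a i * (b i * s i) ^ 2 = (a i * b i) * (b i * s i ^ 2) := by ring
    _ ≤ b i * s i ^ 2 :=
        mul_le_of_le_one_left (by have := hb0 i; positivity) (mul_le_one₀ (ha1 i) (hb0 i) (hb1 i))

lemma sqrt_sum_mul_sq_mul_sum_le {a b : ι → ℝ} {r : ι → ι → ℝ} {c : ℝ} (hc : 0 < c)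
    (hca : ∀ i, c ≤ a i) (hb0 : ∀ i, 0 ≤ b i) (hb1 : ∀ i, b i ≤ 1) :
    √(∑ i, a i * (b i * ∑ j, r i j) ^ 2)
      ≤ √(Fintype.card ι) * √(1 / c) * √(∑ i, ∑ j, a i * a j * r i j ^ 2) := by
  have ha : ∀ i, 0 ≤ a i := fun i => hc.le.trans (hca i)
  rw [← Real.sqrt_mul (Nat.cast_nonneg _), ← Real.sqrt_mul (by positivity), mul_sum]
  refine Real.sqrt_le_sqrt (sum_le_sum fun i _ => ?_)
  have hcs : (∑ j, r i j) ^ 2 ≤ Fintype.card ι * ∑ j, r i j ^ 2 := by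
    simpa using sq_sum_le_card_mul_sum_sq (s := univ) (f := r i)
  have hw := sum_le_inv_mul_sum_mul hc hca fun j => sq_nonneg (r i j)
  calc a i * (b i * ∑ j, r i j) ^ 2 ≤ a i * (∑ j, r i j) ^ 2 := by
        rw [mul_pow]
        exact mul_le_mul_of_nonneg_left
          (mul_le_of_le_one_left (sq_nonneg _) (pow_le_one₀ (hb0 i) (hb1 i))) (ha i)
    _ ≤ a i * (Fintype.card ι * (1 / c * ∑ j, a j * r i j ^ 2)) :=
        mul_le_mul_of_nonneg_left (hcs.trans (by gcongr)) (ha i)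
    _ = Fintype.card ι * (1 / c) * ∑ j, a i * a j * r i j ^ 2 := by
        rw [mul_sum, mul_sum, mul_sum, mul_sum]
        exact sum_congr rfl fun j _ => by ring

end WeightedSums

lemma fmin_pos {n : ℕ} [NeZero n] {a : Fin n → ℝ} (ha : ∀ i, 0 < a i) : 0 < fmin a :=
  (Finset.lt_inf'_iff _).2 fun i _ => ha i

lemma fmin_le {n : ℕ} [NeZero n] (a : Fin n → ℝ) (i : Fin n) : fmin a ≤ a i :=
  Finset.inf'_le _ (Finset.mem_univ i)

section WeightedAverages

variable {ι E : Type*} [Fintype ι] [NormedAddCommGroup E] [InnerProductSpace ℝ E]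

lemma sum_sum_mul_mul_norm_sub_sq {a : ι → ℝ} (ha : ∑ i, a i = 1) (u : ι → E) :
    ∑ i, ∑ j, a i * a j * ‖u i - u j‖ ^ 2 = 2 * ∑ i, a i * ‖u i - ∑ k, a k • u k‖ ^ 2 := by
  set m := ∑ k, a k • u k
  have hcentered : ∑ j, a j • (u j - m) = 0 := by
    simp only [smul_sub, sum_sub_distrib, ← sum_smul, ha, one_smul, m, sub_self]
  have hrow : ∀ i, ∑ j, a j * ‖u i - u j‖ ^ 2 = ‖u i - m‖ ^ 2 + ∑ j, a j * ‖u j - m‖ ^ 2 := by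
    intro i
    calc ∑ j, a j * ‖u i - u j‖ ^ 2
        = ∑ j, (a j * ‖u i - m‖ ^ 2 - 2 * ⟪u i - m, a j • (u j - m)⟫
            + a j * ‖u j - m‖ ^ 2) := by
          refine sum_congr rfl fun j _ => ?_
          rw [← sub_sub_sub_cancel_right (u i) (u j) m, norm_sub_sq_real, real_inner_smul_right]
          ring
      _ = ‖u i - m‖ ^ 2 + ∑ j, a j * ‖u j - m‖ ^ 2 := by
          rw [sum_add_distrib, sum_sub_distrib, ← sum_mul, ha, ← mul_sum, ← inner_sum,
            hcentered, inner_zero_right]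
          ring
  calc ∑ i, ∑ j, a i * a j * ‖u i - u j‖ ^ 2
      = ∑ i, a i * (‖u i - m‖ ^ 2 + ∑ j, a j * ‖u j - m‖ ^ 2) := by
        simp only [← hrow, mul_sum, mul_assoc]
    _ = 2 * ∑ i, a i * ‖u i - m‖ ^ 2 := by
        rw [sum_congr rfl fun i _ => mul_add _ _ _, sum_add_distrib, ← sum_mul, ha]
        ring

lemma Derr_eq_sqrt_two_mul {n d : ℕ} {a : Fin n → ℝ} (ha : ∑ i, a i = 1)
    (u : Fin n → EuclideanSpace ℝ (Fin d)) :
    Derr a u = √2 * √(∑ i, a i * ‖u i - ∑ k, a k • u k‖ ^ 2) := by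
  rw [Derr, sum_sum_mul_mul_norm_sub_sq ha, Real.sqrt_mul zero_le_two]

lemma norm_sum_smul_sq_le {w : ι → ℝ} (hw0 : ∀ i, 0 ≤ w i) (hw1 : ∑ i, w i = 1) (v : ι → E) :
    ‖∑ i, w i • v i‖ ^ 2 ≤ ∑ i, w i * ‖v i‖ ^ 2 := by
  simpa using ((convexOn_norm convex_univ).pow (fun _ _ => norm_nonneg _) 2).map_sum_le
    (t := univ) (fun i _ => hw0 i) hw1 (fun i _ => Set.mem_univ (v i))

lemma sum_mul_norm_sum_smul_sq_le {φ φ' : ι → ℝ} {R : ι → ι → ℝ} (hφ' : ∀ i, 0 ≤ φ' i)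
    (hR : ∀ i j, 0 ≤ R i j) (hRrow : ∀ i, ∑ j, R i j = 1) (hφR : ∀ j, ∑ i, φ' i * R i j = φ j)
    (v : ι → E) :
    ∑ i, φ' i * ‖∑ j, R i j • v j‖ ^ 2 ≤ ∑ j, φ j * ‖v j‖ ^ 2 :=
  calc ∑ i, φ' i * ‖∑ j, R i j • v j‖ ^ 2
      ≤ ∑ i, φ' i * ∑ j, R i j * ‖v j‖ ^ 2 := sum_le_sum fun i _ =>
        mul_le_mul_of_nonneg_left (norm_sum_smul_sq_le (hR i) (hRrow i) v) (hφ' i)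
    _ = ∑ j, φ j * ‖v j‖ ^ 2 := by
        simp only [← hφR, mul_sum, sum_mul, mul_assoc]
        exact sum_comm

end WeightedAverages

section Splittings

variable {E : Type*} [NormedAddCommGroup E] [InnerProductSpace ℝ E]

lemma norm_smul_sum_sub_le {ι : Type*} [Fintype ι] {g : ι → E → E} {L : ℝ}
    (hg : ∀ l u v, ‖g l u - g l v‖ ≤ L * ‖u - v‖) {x y : ι → E}
    (htrack : ∑ l, y l = ∑ l, g l (x l)) {c : ℝ} (hc : 0 < c) (u w : E) :
    ‖c • ∑ l, g l u - w‖ ≤ c * ‖c⁻¹ • w - ∑ l, y l‖ + c * (L * ∑ l, ‖u - x l‖) := by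
  have hsplit : c • ∑ l, g l u - w = c • ∑ l, (g l u - g l (x l)) - c • (c⁻¹ • w - ∑ l, y l) := by
    rw [htrack, sum_sub_distrib, smul_sub, smul_sub, smul_inv_smul₀ hc.ne']
    abel
  have hlip : ‖∑ l, (g l u - g l (x l))‖ ≤ L * ∑ l, ‖u - x l‖ :=
    (norm_sum_le _ _).trans <| (sum_le_sum fun l _ => hg l u (x l)).trans_eq (mul_sum ..).symm
  rw [hsplit]
  refine (norm_sub_le _ _).trans ?_
  rw [norm_smul, norm_smul, Real.norm_eq_abs, abs_of_pos hc, add_comm]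
  gcongr

lemma norm_mix_sub_le {ι : Type*} [Fintype ι] (R : ι → ι → ℝ) (x p : ι → E) {lam : ℝ}
    (hlam : 0 ≤ lam) (m : E) (i : ι) :
    ‖∑ j, R i j • ((1 - lam) • x j + lam • p j) - x i‖
      ≤ ‖∑ j, R i j • x j - m‖ + ‖x i - m‖ + lam * ‖∑ j, R i j • (p j - x j)‖ := by
  have hsplit : ∑ j, R i j • ((1 - lam) • x j + lam • p j) - x i
      = (∑ j, R i j • x j - m) + (m - x i) + lam • ∑ j, R i j • (p j - x j) := by
    have hj : ∀ j, R i j • ((1 - lam) • x j + lam • p j)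
        = R i j • x j + lam • (R i j • (p j - x j)) := fun j => by module
    rw [sum_congr rfl fun j _ => hj j, sum_add_distrib, ← smul_sum]
    abel
  rw [hsplit]
  refine norm_add₃_le.trans_eq ?_
  rw [norm_sub_rev m, norm_smul, Real.norm_eq_abs, abs_of_nonneg hlam]

end Splittings

section AverageOfFunctions

variable {E : Type*} [NormedAddCommGroup E] [InnerProductSpace ℝ E] {n : ℕ} {f : Fin n → E → ℝ}

lemma differentiable_average (hf : ∀ l, Differentiable ℝ (f l)) :
    Differentiable ℝ fun w => 1 / (n : ℝ) * ∑ l, f l w :=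
  (Differentiable.fun_sum fun l _ => hf l).const_mul _

variable [CompleteSpace E]

lemma gradient_average (hf : ∀ l, Differentiable ℝ (f l)) (v : E) :
    gradient (fun w => 1 / (n : ℝ) * ∑ l, f l w) v = (1 / (n : ℝ)) • ∑ l, gradient (f l) v := by
  refine HasGradientAt.gradient ?_
  rw [hasGradientAt_iff_hasFDerivAt, map_smul, map_sum]
  exact (HasFDerivAt.fun_sum fun l _ => (hf l v).hasGradientAt).const_mul _

variable [NeZero n]

lemma inner_gradient_average_sub_ge (hf : ∀ l, Differentiable ℝ (f l)) {μ : ℝ}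
    (hs : ∀ l u v, μ * ‖u - v‖ ^ 2 ≤ ⟪gradient (f l) u - gradient (f l) v, u - v⟫) (u v : E) :
    μ * ‖u - v‖ ^ 2 ≤ ⟪gradient (fun w => 1 / (n : ℝ) * ∑ l, f l w) u
      - gradient (fun w => 1 / (n : ℝ) * ∑ l, f l w) v, u - v⟫ := by
  rw [gradient_average hf, gradient_average hf, ← smul_sub, ← sum_sub_distrib,
    real_inner_smul_left, sum_inner, one_div, le_inv_mul_iff₀ (Nat.cast_pos.2 (NeZero.pos n))]
  simpa using card_nsmul_le_sum univ _ _ fun l _ => hs l u v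

lemma norm_gradient_average_sub_le (hf : ∀ l, Differentiable ℝ (f l)) {L : ℝ}
    (hL : ∀ l u v, ‖gradient (f l) u - gradient (f l) v‖ ≤ L * ‖u - v‖) (u v : E) :
    ‖gradient (fun w => 1 / (n : ℝ) * ∑ l, f l w) u
      - gradient (fun w => 1 / (n : ℝ) * ∑ l, f l w) v‖ ≤ L * ‖u - v‖ := by
  rw [gradient_average hf, gradient_average hf, ← smul_sub, ← sum_sub_distrib, norm_smul,
    Real.norm_eq_abs, one_div, abs_inv, Nat.abs_cast,
    inv_mul_le_iff₀ (Nat.cast_pos.2 (NeZero.pos n))]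
  refine (norm_sum_le _ _).trans ?_
  simpa using sum_le_card_nsmul univ _ _ fun l _ => hL l u v

end AverageOfFunctions

section TrackingStep

variable {E : Type*} [NormedAddCommGroup E] [InnerProductSpace ℝ E] [CompleteSpace E]
  {n : ℕ} [NeZero n] {X : Set E} {P : E → E} {f : Fin n → E → ℝ} {μ L : ℝ} {xs : E}

/-- With gradient tracking, the step `u - η • w` of node `j` (weight `c = π j`) is compared with
the projected gradient step of size `η n c` on the average, which contracts towards `xs`. -/
lemma norm_proj_tracking_step_sub_le (hX : Convex ℝ X) (hPmem : ∀ v, P v ∈ X)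
    (hPproj : ∀ v, ∀ u ∈ X, ‖v - P v‖ ≤ ‖v - u‖) (hf : ∀ l, Differentiable ℝ (f l))
    (hs : ∀ l u v, μ * ‖u - v‖ ^ 2 ≤ ⟪gradient (f l) u - gradient (f l) v, u - v⟫)
    (hL : ∀ l u v, ‖gradient (f l) u - gradient (f l) v‖ ≤ L * ‖u - v‖) (hμL : μ ≤ L)
    (hxs : xs ∈ X) (hmin : IsMinOn (fun w => 1 / (n : ℝ) * ∑ l, f l w) X xs)
    {x y : Fin n → E} (htrack : ∑ l, y l = ∑ l, gradient (f l) (x l)) {η c q : ℝ}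
    (hη : 0 < η) (hc : 0 < c) (hstep : η * n * c * L < 1) (hq : 1 - η * n * c * μ ≤ q)
    (u w : E) :
    ‖P (u - η • w) - u‖
      ≤ (1 + q) * ‖u - xs‖ + η * (c * ‖c⁻¹ • w - ∑ l, y l‖)
        + η * L * (c * ∑ l, ‖u - x l‖) := by
  set F := fun w => 1 / (n : ℝ) * ∑ l, f l w
  have hn : (n : ℝ) ≠ 0 := Nat.cast_ne_zero.2 (NeZero.ne n)
  have hcontr := norm_proj_sub_smul_gradient_sub_le hX hPmem hPproj (differentiable_average hf)
    (inner_gradient_average_sub_ge hf hs) (norm_gradient_average_sub_le hf hL) hμL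
    (by positivity) hstep hxs hmin u
  have hdir : (u - η • w) - (u - (η * n * c) • gradient F u)
      = η • (c • ∑ l, gradient (f l) u - w) := by
    rw [gradient_average hf, smul_smul, show η * n * c * (1 / n) = η * c by field_simp]
    module
  have hnonexp := norm_proj_sub_proj_le hX hPmem hPproj (u - η • w)
    (u - (η * n * c) • gradient F u)
  rw [hdir, norm_smul, Real.norm_eq_abs, abs_of_pos hη] at hnonexp
  have htr := norm_smul_sum_sub_le (fun l => hL l) htrack hc u w
  have h1 := norm_sub_le_norm_sub_add_norm_sub (P (u - η • w))
    (P (u - (η * n * c) • gradient F u)) u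
  have h2 := norm_sub_le_norm_sub_add_norm_sub (P (u - (η * n * c) • gradient F u)) xs u
  rw [norm_sub_rev xs u] at h2
  have h3 := mul_le_mul_of_nonneg_right hq (norm_nonneg (u - xs))
  have h4 := mul_le_mul_of_nonneg_left htr hη.le
  linarith

end TrackingStep

lemma one_sub_le_qmax {n : ℕ} [NeZero n] (π : Fin n → ℝ) (μ η lam : ℝ) (j : Fin n) :
    1 - lam * (η * n * π j) * μ ≤ qmax π μ η lam :=
  le_sup' (fun i => 1 - lam * (η * n * π i) * μ) (mem_univ j)

lemma sqrt_sum_mul_norm_proj_tracking_step_sub_le {n d : ℕ} [NeZero n]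
    {X : Set (EuclideanSpace ℝ (Fin d))}
    {P : EuclideanSpace ℝ (Fin d) → EuclideanSpace ℝ (Fin d)} (hX : Convex ℝ X)
    (hPmem : ∀ v, P v ∈ X) (hPproj : ∀ v, ∀ u ∈ X, ‖v - P v‖ ≤ ‖v - u‖)
    {f : Fin n → EuclideanSpace ℝ (Fin d) → ℝ} (hf : ∀ l, Differentiable ℝ (f l)) {μ L : ℝ}
    (hμ : 0 < μ) (hs : ∀ l u v, μ * ‖u - v‖ ^ 2 ≤ ⟪gradient (f l) u - gradient (f l) v, u - v⟫)
    (hL : ∀ l u v, ‖gradient (f l) u - gradient (f l) v‖ ≤ L * ‖u - v‖) (hμL : μ ≤ L)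
    {xs : EuclideanSpace ℝ (Fin d)} (hxs : xs ∈ X)
    (hmin : IsMinOn (fun w => 1 / (n : ℝ) * ∑ l, f l w) X xs) {φ π : Fin n → ℝ}
    (hφpos : ∀ i, 0 < φ i) (hφsum : ∑ i, φ i = 1) (hπpos : ∀ i, 0 < π i) (hπsum : ∑ i, π i = 1)
    {η : ℝ} (hη0 : 0 < η) (hη : η < 1 / (n * L)) {x y : Fin n → EuclideanSpace ℝ (Fin d)}
    (htrack : ∑ l, y l = ∑ l, gradient (f l) (x l)) :
    √(∑ j, φ j * ‖P (x j - η • y j) - x j‖ ^ 2)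
      ≤ (1 + qmax π μ η 1) * √(∑ j, φ j * ‖x j - xs‖ ^ 2) + η * Serr π y
        + η * L * (√n * √(1 / fmin φ) * Derr φ x) := by
  have hφ1 : ∀ j, φ j ≤ 1 := fun j => hφsum ▸ single_le_sum (fun i _ => (hφpos i).le) (mem_univ j)
  have hπ1 : ∀ j, π j ≤ 1 := fun j => hπsum ▸ single_le_sum (fun i _ => (hπpos i).le) (mem_univ j)
  have hL0 : 0 < L := hμ.trans_le hμL
  have hηnL : η * n * L < 1 := by
    rw [lt_div_iff₀ (mul_pos (Nat.cast_pos.2 (NeZero.pos n)) hL0)] at hη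
    linarith
  have hstep : ∀ j, η * n * π j * L < 1 := fun j =>
    calc η * n * π j * L = η * n * L * π j := by ring
      _ ≤ η * n * L := mul_le_of_le_one_right (by positivity) (hπ1 j)
      _ < 1 := hηnL
  have hq : ∀ j, 1 - η * n * π j * μ ≤ qmax π μ η 1 := fun j => by
    simpa using one_sub_le_qmax π μ η 1 j
  have hq0 : 0 ≤ 1 + qmax π μ η 1 := by
    have := mul_le_mul_of_nonneg_left hμL (by have := hπpos 0; positivity : 0 ≤ η * n * π 0)
    linarith [hq 0, hstep 0]
  have hpt := fun j => norm_proj_tracking_step_sub_le hX hPmem hPproj hf hs hL hμL hxs hmin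
    htrack hη0 (hπpos j) (hstep j) (hq j) (x j) (y j)
  refine (sqrt_sum_mul_sq_le_add_add (fun j => (hφpos j).le) (fun j => norm_nonneg _) hpt).trans ?_
  rw [sqrt_sum_mul_mul_sq _ _ hq0, sqrt_sum_mul_mul_sq _ _ hη0.le,
    sqrt_sum_mul_mul_sq _ _ (by positivity)]
  gcongr
  · exact sqrt_sum_mul_mul_sq_le hφ1 (fun j => (hπpos j).le) hπ1
  · have := sqrt_sum_mul_sq_mul_sum_le (r := fun j l => ‖x j - x l‖) (fmin_pos hφpos)
      (fmin_le φ) (fun j => (hπpos j).le) hπ1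
    rwa [Fintype.card_fin] at this

lemma sqrt_sum_norm_mix_sub_le {ι E : Type*} [Fintype ι] [NormedAddCommGroup E]
    [InnerProductSpace ℝ E] {φ φ' : ι → ℝ} {R : ι → ι → ℝ} {c c' σ lam : ℝ} (hc : 0 < c)
    (hcφ : ∀ i, c ≤ φ i) (hc' : 0 < c') (hcφ' : ∀ i, c' ≤ φ' i) (hR : ∀ i j, 0 ≤ R i j)
    (hRrow : ∀ i, ∑ j, R i j = 1) (hφR : ∀ j, ∑ i, φ' i * R i j = φ j) (hlam : 0 ≤ lam)
    {x : ι → E}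
    (hcontr : √(∑ i, φ' i * ‖(∑ j, R i j • x j) - (∑ j, φ j • x j)‖ ^ 2)
      ≤ σ * √(∑ i, φ i * ‖x i - (∑ j, φ j • x j)‖ ^ 2)) (p : ι → E) :
    √(∑ i, ‖∑ j, R i j • ((1 - lam) • x j + lam • p j) - x i‖ ^ 2)
      ≤ (√(1 / c) + σ * √(1 / c')) * √(∑ i, φ i * ‖x i - ∑ j, φ j • x j‖ ^ 2)
        + lam * √(1 / c') * √(∑ j, φ j * ‖p j - x j‖ ^ 2) := by
  set m := ∑ j, φ j • x j
  have hsplit := sqrt_sum_mul_sq_le_add_add (a := fun _ => 1) (fun _ => zero_le_one)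
    (fun i => norm_nonneg _) fun i => norm_mix_sub_le R x p hlam m i
  rw [sqrt_sum_mul_mul_sq _ _ hlam] at hsplit
  simp only [one_mul] at hsplit
  have hRx : √(∑ i, ‖∑ j, R i j • x j - m‖ ^ 2) ≤ √(1 / c') * (σ * √(∑ i, φ i * ‖x i - m‖ ^ 2)) :=
    (sqrt_sum_le_sqrt_inv_mul_sqrt_sum_mul hc' hcφ' fun i => sq_nonneg _).trans (by gcongr)
  have hx : √(∑ i, ‖x i - m‖ ^ 2) ≤ √(1 / c) * √(∑ i, φ i * ‖x i - m‖ ^ 2) :=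
    sqrt_sum_le_sqrt_inv_mul_sqrt_sum_mul hc hcφ fun i => sq_nonneg _
  have hRp : √(∑ i, ‖∑ j, R i j • (p j - x j)‖ ^ 2)
      ≤ √(1 / c') * √(∑ j, φ j * ‖p j - x j‖ ^ 2) :=
    (sqrt_sum_le_sqrt_inv_mul_sqrt_sum_mul hc' hcφ' fun i => sq_nonneg _).trans <|
      mul_le_mul_of_nonneg_left (Real.sqrt_le_sqrt <| sum_mul_norm_sum_smul_sq_le
        (fun i => hc'.le.trans (hcφ' i)) hR hRrow hφR _) (Real.sqrt_nonneg _)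
  calc _ ≤ _ := hsplit
    _ ≤ √(1 / c') * (σ * √(∑ i, φ i * ‖x i - m‖ ^ 2)) + √(1 / c) * √(∑ i, φ i * ‖x i - m‖ ^ 2)
        + lam * (√(1 / c') * √(∑ j, φ j * ‖p j - x j‖ ^ 2)) := by gcongr
    _ = _ := by ring

theorem consecutive_iterates_bound_general {n d : ℕ} [NeZero n]
    (X : Set (EuclideanSpace ℝ (Fin d)))
    (hXconvex : Convex ℝ X)
    (P : EuclideanSpace ℝ (Fin d) → EuclideanSpace ℝ (Fin d))
    (hPmem : ∀ v, P v ∈ X)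
    (hPproj : ∀ v, ∀ u ∈ X, ‖v - P v‖ ≤ ‖v - u‖)
    (f : Fin n → EuclideanSpace ℝ (Fin d) → ℝ)
    (hfdiff : ∀ i, Differentiable ℝ (f i))
    (μ L : ℝ) (hμ : 0 < μ) (hμL : μ ≤ L)
    (hstrong : ∀ i u v, μ * ‖u - v‖ ^ 2 ≤ ⟪gradient (f i) u - gradient (f i) v, u - v⟫)
    (hsmooth : ∀ i u v, ‖gradient (f i) u - gradient (f i) v‖ ≤ L * ‖u - v‖)
    (F : EuclideanSpace ℝ (Fin d) → ℝ)
    (hF : F = fun v => (1 / (n : ℝ)) * ∑ l, f l v)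
    (xs : EuclideanSpace ℝ (Fin d)) (hxsmem : xs ∈ X)
    (hxsmin : ∀ u ∈ X, F xs ≤ F u)
    (φ φ' π : Fin n → ℝ)
    (hφpos : ∀ i, 0 < φ i) (hφsum : ∑ i, φ i = 1)
    (hφ'pos : ∀ i, 0 < φ' i)
    (hπpos : ∀ i, 0 < π i) (hπsum : ∑ i, π i = 1)
    (R : Fin n → Fin n → ℝ)
    (hRnonneg : ∀ i j, 0 ≤ R i j) (hRrow : ∀ i, ∑ j, R i j = 1)
    (hφR : ∀ j, ∑ i, φ' i * R i j = φ j)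
    (η lam : ℝ) (hη0 : 0 < η) (hη : η < 1 / (n * L)) (hlam0 : 0 < lam)
    (x y : Fin n → EuclideanSpace ℝ (Fin d))
    (htrack : ∑ l, y l = ∑ l, gradient (f l) (x l))
    (z xplus : Fin n → EuclideanSpace ℝ (Fin d))
    (hz : ∀ i, z i = (1 - lam) • x i + lam • P (x i - η • y i))
    (hxplus : ∀ i, xplus i = ∑ j, R i j • z j)
    (σ : ℝ)
    (hRcontr : Real.sqrt (∑ i, φ' i * ‖(∑ j, R i j • x j) - (∑ j, φ j • x j)‖ ^ 2)
      ≤ σ * Real.sqrt (∑ i, φ i * ‖x i - (∑ j, φ j • x j)‖ ^ 2)) :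
    Real.sqrt (∑ i, ‖xplus i - x i‖ ^ 2)
      ≤ lam * Real.sqrt (1 / fmin φ') * (1 + qmax π μ η 1)
          * Real.sqrt (∑ i, φ i * ‖x i - xs‖ ^ 2)
        + ((1 / Real.sqrt 2) * (Real.sqrt (1 / fmin φ) + σ * Real.sqrt (1 / fmin φ'))
            + η * lam * L * Real.sqrt (1 / fmin φ) * Real.sqrt (1 / fmin φ')
              * Real.sqrt (n : ℝ)) * Derr φ x
        + η * lam * Real.sqrt (1 / fmin φ') * Serr π y := by
  subst hF
  have hmix := sqrt_sum_norm_mix_sub_le (fmin_pos hφpos) (fmin_le φ) (fmin_pos hφ'pos)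
    (fmin_le φ') hRnonneg hRrow hφR hlam0.le hRcontr fun j => P (x j - η • y j)
  have hopt := sqrt_sum_mul_norm_proj_tracking_step_sub_le hXconvex hPmem hPproj hfdiff hμ
    hstrong hsmooth hμL hxsmem (isMinOn_iff.2 hxsmin) hφpos hφsum hπpos hπsum hη0 hη htrack
  have hV : √(∑ i, φ i * ‖x i - ∑ j, φ j • x j‖ ^ 2) = 1 / √2 * Derr φ x := by
    rw [Derr_eq_sqrt_two_mul hφsum, ← mul_assoc, one_div_mul_cancel (by positivity), one_mul]
  rw [hV] at hmix
  simp only [hxplus, hz]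
  calc _ ≤ _ := hmix
    _ ≤ (√(1 / fmin φ) + σ * √(1 / fmin φ')) * (1 / √2 * Derr φ x)
        + lam * √(1 / fmin φ') * ((1 + qmax π μ η 1) * √(∑ j, φ j * ‖x j - xs‖ ^ 2)
          + η * Serr π y + η * L * (√n * √(1 / fmin φ) * Derr φ x)) := by gcongr
    _ = _ := by ring

/-- Bounding the distance between consecutive iterates,
Proposition `consecutive-terms-bound`. With `φ̃ = √(1/min φ)`, `φ̃' = √(1/min φ')`,
`√(Σ_i ‖x⁺_i − x_i‖²) ≤ λφ̃'(1 + q_π(η,1))·‖x − x*‖_φ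
+ [(1/√2)(φ̃ + σφ̃') + ηλLφ̃φ̃'√n]·D(x, φ) + ηλφ̃'·S(y, π)`. -/
theorem consecutive_iterates_bound {n d : ℕ} [NeZero n]
    (X : Set (EuclideanSpace ℝ (Fin d))) (hXne : X.Nonempty)
    (hXclosed : IsClosed X) (hXconvex : Convex ℝ X)
    (P : EuclideanSpace ℝ (Fin d) → EuclideanSpace ℝ (Fin d))
    (hPmem : ∀ v, P v ∈ X)
    (hPproj : ∀ v, ∀ u ∈ X, ‖v - P v‖ ≤ ‖v - u‖)
    (f : Fin n → EuclideanSpace ℝ (Fin d) → ℝ)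
    (hfdiff : ∀ i, Differentiable ℝ (f i))
    (μ L : ℝ) (hμ : 0 < μ) (hμL : μ ≤ L)
    (hstrong : ∀ i u v, μ * ‖u - v‖ ^ 2 ≤ ⟪gradient (f i) u - gradient (f i) v, u - v⟫)
    (hsmooth : ∀ i u v, ‖gradient (f i) u - gradient (f i) v‖ ≤ L * ‖u - v‖)
    (F : EuclideanSpace ℝ (Fin d) → ℝ)
    (hF : F = fun v => (1 / (n : ℝ)) * ∑ l, f l v)
    (xs : EuclideanSpace ℝ (Fin d)) (hxsmem : xs ∈ X)
    (hxsmin : ∀ u ∈ X, F xs ≤ F u)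
    (hxsuniq : ∀ u ∈ X, (∀ v ∈ X, F u ≤ F v) → u = xs)
    (φ φ' π : Fin n → ℝ)
    (hφpos : ∀ i, 0 < φ i) (hφsum : ∑ i, φ i = 1)
    (hφ'pos : ∀ i, 0 < φ' i) (hφ'sum : ∑ i, φ' i = 1)
    (hπpos : ∀ i, 0 < π i) (hπsum : ∑ i, π i = 1)
    (R : Fin n → Fin n → ℝ)
    (hRnonneg : ∀ i j, 0 ≤ R i j) (hRrow : ∀ i, ∑ j, R i j = 1)
    (hφR : ∀ j, ∑ i, φ' i * R i j = φ j)
    (η lam : ℝ) (hη0 : 0 < η) (hη : η < 1 / (n * L)) (hlam0 : 0 < lam) (hlam1 : lam ≤ 1)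
    (x y : Fin n → EuclideanSpace ℝ (Fin d))
    (htrack : ∑ l, y l = ∑ l, gradient (f l) (x l))
    (z xplus : Fin n → EuclideanSpace ℝ (Fin d))
    (hz : ∀ i, z i = (1 - lam) • x i + lam • P (x i - η • y i))
    (hxplus : ∀ i, xplus i = ∑ j, R i j • z j)
    (σ : ℝ) (hσ0 : 0 < σ) (hσ1 : σ < 1)
    (hRcontr : Real.sqrt (∑ i, φ' i * ‖(∑ j, R i j • x j) - (∑ j, φ j • x j)‖ ^ 2)
      ≤ σ * Real.sqrt (∑ i, φ i * ‖x i - (∑ j, φ j • x j)‖ ^ 2)) :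
    Real.sqrt (∑ i, ‖xplus i - x i‖ ^ 2)
      ≤ lam * Real.sqrt (1 / fmin φ') * (1 + qmax π μ η 1)
          * Real.sqrt (∑ i, φ i * ‖x i - xs‖ ^ 2)
        + ((1 / Real.sqrt 2) * (Real.sqrt (1 / fmin φ) + σ * Real.sqrt (1 / fmin φ'))
            + η * lam * L * Real.sqrt (1 / fmin φ) * Real.sqrt (1 / fmin φ')
              * Real.sqrt (n : ℝ)) * Derr φ x
        + η * lam * Real.sqrt (1 / fmin φ') * Serr π y :=
  consecutive_iterates_bound_general X hXconvex P hPmem hPproj f hfdiff μ L hμ hμL hstrong hsmooth F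
    hF xs hxsmem hxsmin φ φ' π hφpos hφsum hφ'pos hπpos hπsum R hRnonneg hRrow hφR η lam hη0 hη
    hlam0 x y htrack z xplus hz hxplus σ hRcontr
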